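/- Let μ be a positive measure on ℝ₊ⁿ∖{0} such that for some δ > 0 the functions u ↦ u_j are μ-integrable on [0,δ)ⁿ∖{0} for each j = 1,…,n and μ(ℝ₊ⁿ∖[0,δ)ⁿ) < ∞. Then for every z ∈ ℂⁿ with Re z_j < 0 for all j, the function u ↦ e^{z·u} − 1 is absolutely μ-integrable on ℝ₊ⁿ∖{0}, and the function z ↦ ∫_{ℝ₊ⁿ∖{0}} (e^{z·u} − 1) dμ(u) is holomorphic on the domain {z ∈ ℂⁿ : Re z_j < 0 for all j}. -/

import Mathlib

open MeasureTheory Filter Set Metric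

noncomputable section

/-- The open negative orthant `(-∞,0)^n`. -/
def negOrthant (n : ℕ) : Set (Fin n → ℝ) := {s | ∀ i, s i < 0}

/-- `f` is absolutely monotone on `(-∞,0)^n`: it is `C^∞` there and all its
iterated partial derivatives (of all orders, including order `0`) are nonnegative. -/
def AbsMono (n : ℕ) (f : (Fin n → ℝ) → ℝ) : Prop :=
  ContDiffOn ℝ (⊤ : ℕ∞) f (negOrthant n) ∧
  ∀ (k : ℕ) (m : Fin k → Fin n), ∀ x ∈ negOrthant n,
    0 ≤ iteratedFDerivWithin ℝ k f (negOrthant n) x (fun i => Pi.single (m i) 1)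

/-- `ψ` belongs to the class `T_n`: it is a nonpositive `C^∞` function on `(-∞,0)^n`
all of whose partial derivatives of every order `≥ 1` are nonnegative. -/
def MemT (n : ℕ) (ψ : (Fin n → ℝ) → ℝ) : Prop :=
  ContDiffOn ℝ (⊤ : ℕ∞) ψ (negOrthant n) ∧
  (∀ x ∈ negOrthant n, ψ x ≤ 0) ∧
  ∀ (k : ℕ) (m : Fin (k + 1) → Fin n), ∀ x ∈ negOrthant n,
    0 ≤ iteratedFDerivWithin ℝ (k + 1) ψ (negOrthant n) x (fun i => Pi.single (m i) 1)

/-- `ℝ₊ⁿ ∖ {0}`. -/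
def posPart (n : ℕ) : Set (Fin n → ℝ) := {u | (∀ i, 0 ≤ u i) ∧ u ≠ 0}

/-- `[0,δ)ⁿ ∖ {0}`. -/
def smallBox (n : ℕ) (δ : ℝ) : Set (Fin n → ℝ) := {u | (∀ i, 0 ≤ u i ∧ u i < δ) ∧ u ≠ 0}

/-- `ℝ₊ⁿ ∖ [0,δ)ⁿ`. -/
def farPart (n : ℕ) (δ : ℝ) : Set (Fin n → ℝ) := {u | (∀ i, 0 ≤ u i) ∧ ¬ ∀ i, u i < δ}

/-- The conditions on the representing measure: for sufficiently small `δ > 0`,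
the coordinate functions are integrable on `[0,δ)ⁿ ∖ {0}` and
`μ(ℝ₊ⁿ ∖ [0,δ)ⁿ) < ∞`. -/
def GoodMeasure (n : ℕ) (μ : Measure (Fin n → ℝ)) : Prop :=
  ∃ δ > (0:ℝ), (∀ j, IntegrableOn (fun u => u j) (smallBox n δ) μ) ∧ μ (farPart n δ) < ⊤

namespace Aux

variable {n : ℕ} {δ : ℝ}

lemma posPart_eq (hδ : 0 < δ) : posPart n = smallBox n δ ∪ farPart n δ := by
  ext u
  show ((∀ i, 0 ≤ u i) ∧ u ≠ 0) ↔
    (((∀ i, 0 ≤ u i ∧ u i < δ) ∧ u ≠ 0) ∨ ((∀ i, 0 ≤ u i) ∧ ¬ ∀ i, u i < δ))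
  constructor
  · rintro ⟨h0, hne⟩
    by_cases h : ∀ i, u i < δ
    · exact Or.inl ⟨fun i => ⟨h0 i, h i⟩, hne⟩
    · exact Or.inr ⟨h0, h⟩
  · rintro (⟨h, hne⟩ | ⟨h0, h⟩)
    · exact ⟨fun i => (h i).1, hne⟩
    · refine ⟨h0, ?_⟩
      push_neg at h
      obtain ⟨i, hi⟩ := h
      intro h0'
      rw [h0'] at hi
      simp at hi
      linarith

lemma measurableSet_smallBox : MeasurableSet (smallBox n δ) := by
  have : smallBox n δ = (⋂ i, ({u : Fin n → ℝ | 0 ≤ u i} ∩ {u | u i < δ})) ∩ {(0 : Fin n → ℝ)}ᶜ := by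
    ext u; simp only [smallBox, mem_setOf_eq, mem_inter_iff, mem_iInter, mem_compl_iff,
      mem_singleton_iff, forall_and]
  rw [this]
  exact (MeasurableSet.iInter fun i =>
    ((measurableSet_le measurable_const (measurable_pi_apply i)).inter
      (measurableSet_lt (measurable_pi_apply i) measurable_const))).inter
    (measurableSet_singleton 0).compl

lemma measurableSet_farPart : MeasurableSet (farPart n δ) := by
  have : farPart n δ = (⋂ i, {u : Fin n → ℝ | 0 ≤ u i}) ∩ (⋂ i, {u : Fin n → ℝ | u i < δ})ᶜ := by
    ext u; simp [farPart]
  rw [this]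
  exact (MeasurableSet.iInter fun i =>
    measurableSet_le measurable_const (measurable_pi_apply i)).inter
    (MeasurableSet.iInter fun i =>
      measurableSet_lt (measurable_pi_apply i) measurable_const).compl

lemma measurableSet_posPart : MeasurableSet (posPart n) := by
  have : posPart n = (⋂ i, {u : Fin n → ℝ | 0 ≤ u i}) ∩ {(0 : Fin n → ℝ)}ᶜ := by
    ext u
    constructor
    · rintro ⟨h1, h2⟩
      exact ⟨mem_iInter.2 fun i => h1 i, h2⟩
    · rintro ⟨h1, h2⟩
      exact ⟨fun i => mem_iInter.1 h1 i, h2⟩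
  rw [this]
  exact (MeasurableSet.iInter fun i =>
    measurableSet_le measurable_const (measurable_pi_apply i)).inter
    (measurableSet_singleton 0).compl

/-- master integrability lemma -/
lemma integrableOn_of_bounds {E : Type*} [NormedAddCommGroup E]
    (μ : Measure (Fin n → ℝ)) (hδ : 0 < δ)
    (hint : ∀ j, IntegrableOn (fun u => u j) (smallBox n δ) μ)
    (hfar : μ (farPart n δ) < ⊤)
    {g : (Fin n → ℝ) → E} (hg : Continuous g)
    (C D : ℝ)
    (h1 : ∀ u ∈ smallBox n δ, ‖g u‖ ≤ C * ∑ i, u i)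
    (h2 : ∀ u ∈ farPart n δ, ‖g u‖ ≤ D) :
    IntegrableOn g (posPart n) μ := by
  rw [posPart_eq (n := n) hδ]
  refine IntegrableOn.union ?_ ?_
  · refine Integrable.mono'
      ((integrable_finset_sum Finset.univ fun j _ => hint j).const_mul C)
      hg.aestronglyMeasurable.restrict
      ((ae_restrict_iff' measurableSet_smallBox).2 (ae_of_all _ h1))
  · refine Integrable.mono' ((integrableOn_const_iff (C := D)).2 (Or.inr hfar))
      hg.aestronglyMeasurable.restrict
      ((ae_restrict_iff' measurableSet_farPart).2 (ae_of_all _ h2))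

lemma norm_exp_sub_one_le {w : ℂ} (hw : w.re ≤ 0) : ‖Complex.exp w - 1‖ ≤ 2 * ‖w‖ := by
  by_cases h : ‖w‖ ≤ 1
  · simpa using
      Complex.norm_exp_sub_one_le (x := w) (by simpa using h)
  · push_neg at h
    calc ‖Complex.exp w - 1‖ ≤ ‖Complex.exp w‖ + ‖(1:ℂ)‖ := norm_sub_le _ _
      _ ≤ 1 + 1 := by
          simp only [Complex.norm_exp, norm_one]
          have := Real.exp_le_one_iff.2 hw
          linarith
      _ ≤ 2 * ‖w‖ := by nlinarith

lemma norm_exp_sub_one_le_two {w : ℂ} (hw : w.re ≤ 0) : ‖Complex.exp w - 1‖ ≤ 2 := by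
  calc ‖Complex.exp w - 1‖ ≤ ‖Complex.exp w‖ + ‖(1:ℂ)‖ := norm_sub_le _ _
    _ ≤ 2 := by
        simp only [Complex.norm_exp, norm_one]
        have := Real.exp_le_one_iff.2 hw
        linarith

lemma re_sum_mul (z : Fin n → ℂ) (u : Fin n → ℝ) :
    (∑ i, z i * (u i : ℂ)).re = ∑ i, (z i).re * u i := by
  rw [Complex.re_sum]
  refine Finset.sum_congr rfl fun i _ => ?_
  simp [Complex.mul_re]

lemma re_sum_le {z : Fin n → ℂ} {u : Fin n → ℝ} {a : ℝ}
    (hz : ∀ j, (z j).re ≤ -a) (hu : ∀ i, 0 ≤ u i) :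
    (∑ i, z i * (u i : ℂ)).re ≤ -a * ∑ i, u i := by
  rw [re_sum_mul, Finset.mul_sum]
  exact Finset.sum_le_sum fun i _ => mul_le_mul_of_nonneg_right (hz i) (hu i)

lemma norm_sum_mul_le (z : Fin n → ℂ) {u : Fin n → ℝ} (hu : ∀ i, 0 ≤ u i) :
    ‖∑ i, z i * (u i : ℂ)‖ ≤ (∑ i, ‖z i‖) * ∑ i, u i := by
  calc ‖∑ i, z i * (u i : ℂ)‖ ≤ ∑ i, ‖z i * (u i : ℂ)‖ := norm_sum_le _ _
    _ = ∑ i, ‖z i‖ * u i := by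
        refine Finset.sum_congr rfl fun i _ => ?_
        rw [norm_mul, Complex.norm_real, Real.norm_of_nonneg (hu i)]
    _ ≤ ∑ i, (∑ j, ‖z j‖) * u i := Finset.sum_le_sum fun i _ =>
        mul_le_mul_of_nonneg_right
          (Finset.single_le_sum (f := fun j => ‖z j‖) (fun j _ => norm_nonneg _)
            (Finset.mem_univ i)) (hu i)
    _ = _ := by rw [← Finset.mul_sum]

/-- the linear map `h ↦ ∑ u i * h i`. -/
def L (u : Fin n → ℝ) : (Fin n → ℂ) →L[ℂ] ℂ :=
  ∑ i, (u i : ℂ) • ContinuousLinearMap.proj i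

lemma L_apply (u : Fin n → ℝ) (z : Fin n → ℂ) : L u z = ∑ i, z i * (u i : ℂ) := by
  simp [L, ContinuousLinearMap.sum_apply, mul_comm]

lemma norm_L_le {u : Fin n → ℝ} (hu : ∀ i, 0 ≤ u i) : ‖L u‖ ≤ ∑ i, u i := by
  refine ContinuousLinearMap.opNorm_le_bound _ (Finset.sum_nonneg fun i _ => hu i) fun x => ?_
  rw [L_apply]
  calc ‖∑ i, x i * (u i : ℂ)‖ ≤ ∑ i, ‖x i * (u i : ℂ)‖ := norm_sum_le _ _
    _ ≤ ∑ i, ‖x‖ * u i := Finset.sum_le_sum fun i _ => by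
        rw [norm_mul, Complex.norm_real, Real.norm_of_nonneg (hu i)]
        exact mul_le_mul_of_nonneg_right (norm_le_pi_norm x i) (hu i)
    _ = (∑ i, u i) * ‖x‖ := by rw [← Finset.mul_sum, mul_comm]

lemma continuous_L : Continuous (fun u : Fin n → ℝ => L u) :=
  continuous_finset_sum _ fun i _ =>
    ((Complex.continuous_ofReal.comp (continuous_apply i)).smul continuous_const)

lemma continuous_exp_sum (z : Fin n → ℂ) :
    Continuous fun u : Fin n → ℝ => Complex.exp (∑ i, z i * (u i : ℂ)) :=
  Complex.continuous_exp.comp (continuous_finset_sum _ fun i _ =>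
    continuous_const.mul (Complex.continuous_ofReal.comp (continuous_apply i)))

lemma hasFDeriv (u : Fin n → ℝ) (z : Fin n → ℂ) :
    HasFDerivAt (fun z : Fin n → ℂ => Complex.exp (∑ i, z i * (u i : ℂ)) - 1)
      (Complex.exp (∑ i, z i * (u i : ℂ)) • L u) z := by
  have h0 : HasFDerivAt (fun z : Fin n → ℂ => ∑ i, z i * (u i : ℂ)) (L u) z := by
    have h := (L u).hasFDerivAt (x := z)
    have he : ⇑(L u) = fun z : Fin n → ℂ => ∑ i, z i * (u i : ℂ) := funext fun z => L_apply u z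
    rwa [he] at h
  exact h0.cexp.sub_const 1

/-- the `ℂ`-Fréchet derivative of `z ↦ e^{z·u} - 1`. -/
def FD (u : Fin n → ℝ) (z : Fin n → ℂ) : (Fin n → ℂ) →L[ℂ] ℂ :=
  Complex.exp (∑ i, z i * (u i : ℂ)) • L u

/-- its restriction of scalars to `ℝ`. -/
def FDr (u : Fin n → ℝ) (z : Fin n → ℂ) : (Fin n → ℂ) →L[ℝ] ℂ :=
  (FD u z).restrictScalars ℝ

lemma hasFDerivFD (u : Fin n → ℝ) (z : Fin n → ℂ) :
    HasFDerivAt (fun z : Fin n → ℂ => Complex.exp (∑ i, z i * (u i : ℂ)) - 1)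
      (FD u z) z := hasFDeriv u z

lemma hasFDerivFDr (u : Fin n → ℝ) (z : Fin n → ℂ) :
    HasFDerivAt (fun z : Fin n → ℂ => Complex.exp (∑ i, z i * (u i : ℂ)) - 1)
      (FDr u z) z := (hasFDeriv u z).restrictScalars ℝ

lemma norm_FD (u : Fin n → ℝ) (z : Fin n → ℂ) :
    ‖FD u z‖ = Real.exp ((∑ i, z i * (u i : ℂ)).re) * ‖L u‖ := by
  rw [FD]
  rw [norm_smul (Complex.exp (∑ i, z i * (u i : ℂ))) (L u),
    Complex.norm_exp]

lemma norm_FDr (u : Fin n → ℝ) (z : Fin n → ℂ) :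
    ‖FDr u z‖ = Real.exp ((∑ i, z i * (u i : ℂ)).re) * ‖L u‖ := by
  rw [FDr, ContinuousLinearMap.norm_restrictScalars, norm_FD]

lemma continuous_FD (z : Fin n → ℂ) : Continuous fun u : Fin n → ℝ => FD u z :=
  (continuous_exp_sum z).smul continuous_L

attribute [irreducible] FD FDr

end Aux

set_option maxHeartbeats 1000000 in
/-- if `μ` satisfies the integrability conditions, then for
every `z ∈ ℂⁿ` with `Re z_j < 0` the function `u ↦ e^{z·u} − 1` is
`μ`-integrable on `ℝ₊ⁿ∖{0}`, and `z ↦ ∫_{ℝ₊ⁿ∖{0}} (e^{z·u} − 1) dμ(u)` is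
holomorphic on `{z ∈ ℂⁿ : Re z_j < 0 ∀ j}`. -/
theorem integral_holomorphic (n : ℕ) (μ : Measure (Fin n → ℝ))
    (δ : ℝ) (hδ : 0 < δ)
    (hint : ∀ j, IntegrableOn (fun u => u j) (smallBox n δ) μ)
    (hfar : μ (farPart n δ) < ⊤) :
    (∀ z : Fin n → ℂ, (∀ j, (z j).re < 0) →
      IntegrableOn (fun u => Complex.exp (∑ i, z i * (u i : ℂ)) - 1) (posPart n) μ) ∧
    DifferentiableOn ℂ
      (fun z : Fin n → ℂ =>
        ∫ u in posPart n, (Complex.exp (∑ i, z i * (u i : ℂ)) - 1) ∂μ)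
      {z : Fin n → ℂ | ∀ j, (z j).re < 0} := by
  have hsmall_pos : ∀ u ∈ smallBox n δ, ∀ i, 0 ≤ u i := fun u hu i => (hu.1 i).1
  have hfar_pos : ∀ u ∈ farPart n δ, ∀ i, 0 ≤ u i := fun u hu i => hu.1 i
  -- Part 1
  have part1 : ∀ z : Fin n → ℂ, (∀ j, (z j).re < 0) →
      IntegrableOn (fun u => Complex.exp (∑ i, z i * (u i : ℂ)) - 1) (posPart n) μ := by
    intro z hz
    refine Aux.integrableOn_of_bounds μ hδ hint hfar
      ((Aux.continuous_exp_sum z).sub continuous_const) (2 * ∑ i, ‖z i‖) 2 ?_ ?_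
    · intro u hu
      have h0 : (∑ i, z i * (u i : ℂ)).re ≤ 0 := by
        have := Aux.re_sum_le (a := 0) (fun j => by simpa using (hz j).le) (hsmall_pos u hu)
        simpa using this
      calc ‖Complex.exp (∑ i, z i * (u i : ℂ)) - 1‖ ≤ 2 * ‖∑ i, z i * (u i : ℂ)‖ :=
            Aux.norm_exp_sub_one_le h0
        _ ≤ 2 * ((∑ i, ‖z i‖) * ∑ i, u i) := by
            have := Aux.norm_sum_mul_le z (hsmall_pos u hu)
            linarith
        _ = (2 * ∑ i, ‖z i‖) * ∑ i, u i := by ring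
    · intro u hu
      refine Aux.norm_exp_sub_one_le_two ?_
      have := Aux.re_sum_le (a := 0) (fun j => by simpa using (hz j).le) (hfar_pos u hu)
      simpa using this
  refine ⟨part1, ?_⟩
  -- Part 2
  rcases Nat.eq_zero_or_pos n with rfl | hn
  · simp only [Finset.univ_eq_empty, Finset.sum_empty, Complex.exp_zero, sub_self,
      integral_zero]
    exact differentiableOn_const 0
  intro z₀ hz₀
  haveI : Nonempty (Fin n) := Fin.pos_iff_nonempty.1 hn
  set c : ℝ := Finset.univ.inf' Finset.univ_nonempty (fun j => -(z₀ j).re) with hc_def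
  have hc : 0 < c := by
    rw [hc_def, Finset.lt_inf'_iff]
    intro j _
    simpa using hz₀ j
  have hcle : ∀ j, c ≤ -(z₀ j).re := fun j =>
    Finset.inf'_le _ (Finset.mem_univ j)
  have hε : (0:ℝ) < c / 2 := by linarith
  -- for z in the ball, all real parts are ≤ -c/2
  have hball : ∀ z ∈ ball z₀ (c / 2), ∀ j, (z j).re ≤ -(c / 2) := by
    intro z hzb j
    have h1 : ‖z j - z₀ j‖ ≤ ‖z - z₀‖ := by
      simpa using norm_le_pi_norm (z - z₀) j
    have h2 : ‖z - z₀‖ < c / 2 := by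
      rw [mem_ball, dist_eq_norm] at hzb
      exact hzb
    have h3 : (z j - z₀ j).re ≤ ‖z j - z₀ j‖ := by
      simpa using Complex.re_le_norm (z j - z₀ j)
    have h4 : (z j).re - (z₀ j).re ≤ ‖z j - z₀ j‖ := by
      simpa [Complex.sub_re] using h3
    have := hcle j
    linarith
  -- the Lipschitz estimate
  have h_lip : ∀ u ∈ posPart n,
      LipschitzOnWith (Real.nnabs ((∑ i, u i) * Real.exp (-(c / 2) * ∑ i, u i)))
        (fun z : Fin n → ℂ => Complex.exp (∑ i, z i * (u i : ℂ)) - 1) (ball z₀ (c / 2)) := by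
    intro u hu
    have hupos : ∀ i, 0 ≤ u i := hu.1
    have hsum : 0 ≤ ∑ i, u i := Finset.sum_nonneg fun i _ => hupos i
    refine Convex.lipschitzOnWith_of_nnnorm_hasFDerivWithin_le (𝕜 := ℝ)
      (f' := fun z => Aux.FDr u z)
      (fun z _ => (Aux.hasFDerivFDr u z).hasFDerivWithinAt)
      (fun z hzb => ?_) (convex_ball z₀ (c / 2))
    rw [← NNReal.coe_le_coe, coe_nnnorm, Real.coe_nnabs, Aux.norm_FDr]
    have hre : (∑ i, z i * (u i : ℂ)).re ≤ -(c / 2) * ∑ i, u i :=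
      Aux.re_sum_le (hball z hzb) hupos
    have hLn : ‖Aux.L u‖ ≤ ∑ i, u i := Aux.norm_L_le hupos
    have hLnn : (0:ℝ) ≤ ‖Aux.L u‖ := norm_nonneg _
    calc Real.exp ((∑ i, z i * (u i : ℂ)).re) * ‖Aux.L u‖
        ≤ Real.exp (-(c / 2) * ∑ i, u i) * (∑ i, u i) := by
          have h1 := Real.exp_le_exp.2 hre
          have h2 : (0:ℝ) < Real.exp ((∑ i, z i * (u i : ℂ)).re) := Real.exp_pos _
          nlinarith [Real.exp_pos (-(c / 2) * ∑ i, u i)]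
      _ = (∑ i, u i) * Real.exp (-(c / 2) * ∑ i, u i) := by ring
      _ ≤ |(∑ i, u i) * Real.exp (-(c / 2) * ∑ i, u i)| := le_abs_self _
  -- the bound is integrable
  have h_bd : IntegrableOn
      (fun u : Fin n → ℝ => (∑ i, u i) * Real.exp (-(c / 2) * ∑ i, u i)) (posPart n) μ := by
    refine Aux.integrableOn_of_bounds μ hδ hint hfar ?_ 1 (2 / c) ?_ ?_
    · exact (continuous_finset_sum _ fun i _ => continuous_apply i).mul
        (Real.continuous_exp.comp (continuous_const.mul
          (continuous_finset_sum _ fun i _ => continuous_apply i)))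
    · intro u hu
      have hupos := hsmall_pos u hu
      have hsum : 0 ≤ ∑ i, u i := Finset.sum_nonneg fun i _ => hupos i
      have he : Real.exp (-(c / 2) * ∑ i, u i) ≤ 1 :=
        Real.exp_le_one_iff.2 (by nlinarith)
      have hnn : 0 ≤ (∑ i, u i) * Real.exp (-(c / 2) * ∑ i, u i) :=
        mul_nonneg hsum (Real.exp_pos _).le
      rw [Real.norm_of_nonneg hnn, one_mul]
      nlinarith
    · intro u hu
      have hupos := hfar_pos u hu
      have hsum : 0 ≤ ∑ i, u i := Finset.sum_nonneg fun i _ => hupos i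
      set t := ∑ i, u i with ht
      have hnn : 0 ≤ t * Real.exp (-(c / 2) * t) :=
        mul_nonneg hsum (Real.exp_pos _).le
      rw [Real.norm_of_nonneg hnn]
      have hE : 0 < Real.exp ((c / 2) * t) := Real.exp_pos _
      have hk : (c / 2) * t ≤ Real.exp ((c / 2) * t) := by
        have := Real.add_one_le_exp ((c / 2) * t)
        linarith
      have hexp : Real.exp (-(c / 2) * t) = 1 / Real.exp ((c / 2) * t) := by
        rw [neg_mul, Real.exp_neg, one_div]
      rw [hexp, mul_one_div, div_le_div_iff₀ hE (by linarith : (0:ℝ) < c)]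
      nlinarith
  have key := hasFDerivAt_integral_of_dominated_loc_of_lip
    (μ := μ.restrict (posPart n))
    (F := fun (z : Fin n → ℂ) (u : Fin n → ℝ) => Complex.exp (∑ i, z i * (u i : ℂ)) - 1)
    (F' := fun u : Fin n → ℝ => Aux.FD u z₀)
    (x₀ := z₀)
    (bound := fun u : Fin n → ℝ => (∑ i, u i) * Real.exp (-(c / 2) * ∑ i, u i))
    (s := ball z₀ (c / 2)) (ball_mem_nhds z₀ hε)
    (Eventually.of_forall fun z =>
      ((Aux.continuous_exp_sum z).sub continuous_const).aestronglyMeasurable.restrict)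
    (part1 z₀ hz₀)
    ((Aux.continuous_FD z₀).aestronglyMeasurable.restrict)
    ((ae_restrict_iff' Aux.measurableSet_posPart).2 (ae_of_all _ h_lip))
    h_bd
    (Eventually.of_forall fun u => Aux.hasFDerivFD u z₀)
  exact key.2.differentiableAt.differentiableWithinAt
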